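/- A function f : GF(p)^n → GF(p) is bent if and only if the p^n × p^n matrix M with entries M_{x,y} = ζ^(f(x-y)) (x, y ranging over GF(p)^n) is a Butson matrix, i.e., M · conj(M)^T = p^n I. -/

import Mathlib

open Finset Matrix

/-- The primitive `p`-th root of unity `ζ = e^(2πi/p)`. -/
noncomputable def zeta (p : ℕ) : ℂ := Complex.exp (2 * Real.pi * Complex.I / p)

/-- The Walsh transform of `f : GF(p)^n → GF(p)`. -/
noncomputable def walsh (p n : ℕ) [NeZero p] (f : (Fin n → ZMod p) → ZMod p)
    (u : Fin n → ZMod p) : ℂ :=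
  ∑ x : Fin n → ZMod p, zeta p ^ (f x - ∑ i, u i * x i).val

/-!
Write `ψ a = ζ^a` and `V = GF(p)^n`. Since `M_{x,y} = ψ (f (x - y))`, the entry `(M Mᴴ)_{x,z}` is the
autocorrelation `C_f (x - z) = ∑ₜ ψ (f (x - z + t) - f t)`, so `M` is Butson iff `C_f = p^n δ₀`.
Expanding `|W_f u|²` shows it is the Fourier transform `∑ₐ ψ (-⟨u, a⟩) C_f a` of `C_f`, while the
Fourier transform of `p^n δ₀` is the constant `p^n`. The transform is injective because the
characters `u ↦ ψ ⟨u, a⟩` are orthogonal (`ψ` is primitive), so `f` is bent iff `C_f = p^n δ₀`.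
-/

lemma AddChar.map_sum_eq_prod {ι A M : Type*} [AddCommMonoid A] [CommMonoid M]
    (ψ : AddChar A M) (s : Finset ι) (g : ι → A) :
    ψ (∑ i ∈ s, g i) = ∏ i ∈ s, ψ (g i) :=
  map_prod ψ.toMonoidHom (fun i => Multiplicative.ofAdd (g i)) s

lemma norm_eq_rpow_div_two_iff {E : Type*} [SeminormedAddGroup E] (w : E) {x : ℝ} (hx : 0 ≤ x)
    (n : ℕ) : ‖w‖ = x ^ ((n : ℝ) / 2) ↔ ‖w‖ ^ 2 = x ^ n := by
  have hsq : (x ^ ((n : ℝ) / 2)) ^ 2 = x ^ n := by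
    rw [← Real.rpow_natCast _ 2, ← Real.rpow_mul hx]
    norm_num
  rw [← hsq, sq_eq_sq₀ (norm_nonneg w) (by positivity)]

section Autocorrelation

variable {G A : Type*} [AddCommGroup G] [Fintype G] [AddCommGroup A] (ψ : AddChar A ℂ)

noncomputable def autocorrelation (f : G → A) (a : G) : ℂ :=
  ∑ t, ψ (f (a + t) - f t)

variable [Finite A]

lemma mul_conjTranspose_of_sub (f : G → A) :
    of (fun x y => ψ (f (x - y))) * (of fun x y => ψ (f (x - y)))ᴴ =
      of fun x z => autocorrelation ψ f (x - z) := by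
  ext x z
  simp only [mul_apply, conjTranspose_apply, of_apply, Complex.star_def, ← AddChar.map_neg_eq_conj,
    ← AddChar.map_add_eq_mul, ← sub_eq_add_neg, autocorrelation]
  exact Fintype.sum_equiv (Equiv.subLeft z) _ _ fun y => by simp

variable [DecidableEq G]

lemma mul_conjTranspose_of_sub_eq_smul_one_iff (f : G → A) (c : ℂ) :
    of (fun x y => ψ (f (x - y))) * (of fun x y => ψ (f (x - y)))ᴴ = c • 1 ↔
      autocorrelation ψ f = fun a => if a = 0 then c else 0 := by
  rw [mul_conjTranspose_of_sub, ← Matrix.ext_iff, funext_iff]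
  refine ⟨fun h a => by simpa [one_apply] using h a 0, fun h x z => ?_⟩
  simp [h, one_apply, sub_eq_zero]

end Autocorrelation

section Fourier

variable {R ι : Type*} [CommRing R] [Fintype R] [Fintype ι] [DecidableEq ι] (ψ : AddChar R ℂ)

noncomputable def walshTransform (f : (ι → R) → R) (u : ι → R) : ℂ :=
  ∑ x, ψ (f x - u ⬝ᵥ x)

noncomputable def dotFourier (g : (ι → R) → ℂ) (u : ι → R) : ℂ :=
  ∑ a, ψ (-(u ⬝ᵥ a)) * g a

lemma norm_walshTransform_sq (f : (ι → R) → R) (u : ι → R) :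
    (‖walshTransform ψ f u‖ ^ 2 : ℂ) = dotFourier ψ (autocorrelation ψ f) u := by
  rw [← Complex.mul_conj', walshTransform, map_sum, Finset.sum_mul_sum, dotFourier]
  simp only [autocorrelation, Finset.mul_sum, ← AddChar.map_neg_eq_conj, ← AddChar.map_add_eq_mul]
  rw [Finset.sum_comm]
  conv_rhs => rw [Finset.sum_comm]
  refine Finset.sum_congr rfl fun t _ => Fintype.sum_equiv (Equiv.subRight t) _ _ fun x => ?_
  rw [Equiv.subRight_apply, sub_add_cancel, dotProduct_sub]
  congr 1
  abel

variable [DecidableEq R]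

lemma dotFourier_ite_zero (c : ℂ) :
    dotFourier ψ (fun a : ι → R => if a = 0 then c else 0) = fun _ => c := by
  funext u
  simp [dotFourier]

variable {ψ}

lemma sum_apply_dotProduct (hψ : ψ.IsPrimitive) (a : ι → R) :
    ∑ u : ι → R, ψ (u ⬝ᵥ a) = if a = 0 then (Fintype.card (ι → R) : ℂ) else 0 := by
  calc ∑ u : ι → R, ψ (u ⬝ᵥ a) = ∏ i, ∑ c, ψ (c * a i) := by
        simp only [Fintype.prod_sum, dotProduct, AddChar.map_sum_eq_prod]
    _ = ∏ i, ((if a i = 0 then Fintype.card R else 0 : ℕ) : ℂ) := by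
        simp only [AddChar.sum_mulShift _ hψ]
    _ = _ := by simp [Finset.prod_ite_zero, funext_iff]

lemma sum_mul_dotFourier (hψ : ψ.IsPrimitive) (g : (ι → R) → ℂ) (b : ι → R) :
    ∑ u, ψ (u ⬝ᵥ b) * dotFourier ψ g u = Fintype.card (ι → R) * g b := by
  calc ∑ u, ψ (u ⬝ᵥ b) * dotFourier ψ g u = ∑ a, g a * ∑ u, ψ (u ⬝ᵥ (b - a)) := by
        simp only [dotFourier, Finset.mul_sum]
        rw [Finset.sum_comm]
        refine Finset.sum_congr rfl fun a _ => Finset.sum_congr rfl fun u _ => ?_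
        rw [dotProduct_sub, sub_eq_add_neg, AddChar.map_add_eq_mul]
        ring
    _ = _ := by
        simp only [sum_apply_dotProduct hψ, sub_eq_zero, mul_ite, mul_zero, Finset.sum_ite_eq,
          Finset.mem_univ, if_true, mul_comm]

lemma dotFourier_injective (hψ : ψ.IsPrimitive) :
    Function.Injective (dotFourier ψ : ((ι → R) → ℂ) → (ι → R) → ℂ) := by
  intro g h hgh
  funext b
  have hcard : (Fintype.card (ι → R) : ℂ) ≠ 0 := Nat.cast_ne_zero.mpr Fintype.card_ne_zero
  apply mul_left_cancel₀ hcard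
  rw [← sum_mul_dotFourier hψ, ← sum_mul_dotFourier hψ, hgh]

end Fourier

lemma zeta_pow_val (p : ℕ) [NeZero p] (a : ZMod p) : zeta p ^ a.val = ZMod.stdAddChar a := by
  rw [ZMod.stdAddChar_apply, ZMod.toCircle_apply, zeta, ← Complex.exp_nat_mul]
  ring_nf

lemma walsh_eq_walshTransform (p n : ℕ) [NeZero p] (f : (Fin n → ZMod p) → ZMod p) :
    walsh p n f = walshTransform ZMod.stdAddChar f := by
  funext u
  simp only [walsh, walshTransform, zeta_pow_val, dotProduct]

theorem bent_iff_butson_general (p n : ℕ) [NeZero p]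
    (f : (Fin n → ZMod p) → ZMod p) :
    (∀ u, ‖walsh p n f u‖ = (p : ℝ) ^ ((n : ℝ) / 2)) ↔
      (Matrix.of fun x y : Fin n → ZMod p => zeta p ^ (f (x - y)).val) *
          (Matrix.of fun x y : Fin n → ZMod p => zeta p ^ (f (x - y)).val)ᴴ =
        ((p : ℂ) ^ n) • (1 : Matrix (Fin n → ZMod p) (Fin n → ZMod p) ℂ) := by
  simp only [zeta_pow_val, walsh_eq_walshTransform, norm_eq_rpow_div_two_iff _ (Nat.cast_nonneg p)]
  rw [mul_conjTranspose_of_sub_eq_smul_one_iff,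
    ← (dotFourier_injective (ZMod.isPrimitive_stdAddChar p)).eq_iff, dotFourier_ite_zero, funext_iff]
  refine forall_congr' fun u => ?_
  rw [← norm_walshTransform_sq]
  norm_cast

/-- `f` is bent iff the matrix `M` with `M_{x,y} = ζ^(f(x-y))` is a Butson matrix,
i.e. `M · conj(M)ᵀ = p^n · I`. -/
theorem bent_iff_butson (p n : ℕ) (hp : p.Prime) [NeZero p]
    (f : (Fin n → ZMod p) → ZMod p) :
    (∀ u, ‖walsh p n f u‖ = (p : ℝ) ^ ((n : ℝ) / 2)) ↔
      (Matrix.of fun x y : Fin n → ZMod p => zeta p ^ (f (x - y)).val) *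
          (Matrix.of fun x y : Fin n → ZMod p => zeta p ^ (f (x - y)).val)ᴴ =
        ((p : ℂ) ^ n) • (1 : Matrix (Fin n → ZMod p) (Fin n → ZMod p) ℂ) :=
  bent_iff_butson_general p n f
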